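/- Let F_{q0} be a subfield of the finite field F_q, let G = {1, μ_1, …, μ_{n−1}} be a subgroup of F_{q0}^* of order n, let b,c ∈ F_{q0} with b ≠ c, and set α_i = (b − μ_i c)/(1 − μ_i) for i = 1,…,n−1. If 0 < k ≤ n, λ ∈ F_{q0} \ G and η ∈ F_q \ F_{q0}^*, then the codes RCTRS_{0,1}(α,b,c,λ,η) and RCTRS_{0,1}(α,b,c,λ,η,∞) are both MDS (in particular, the α_i are pairwise distinct). -/

import Mathlib

open Polynomial Finset

noncomputable section

variable {F : Type*} [Field F]

/-- The twisted polynomial `∑_{i<k} f_i x^i + η f_h x^{k-1+t}` from `V_{k,t,h,η}`. -/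
def twPoly (k t h : ℕ) (η : F) (f : Fin k → F) : Polynomial F :=
  (∑ i : Fin k, Polynomial.C (f i) * Polynomial.X ^ (i : ℕ)) +
    Polynomial.C (η * if hh : h < k then f ⟨h, hh⟩ else 0) * Polynomial.X ^ (k - 1 + t)

/-- The coefficient `f_{k-1}` of a coefficient vector `f : Fin k → F`. -/
def topCoeffFin {k : ℕ} (f : Fin k → F) : F :=
  if hk : k - 1 < k then f ⟨k - 1, hk⟩ else 0

/-- Codewords of the row-column twisted Reed-Solomon code. -/
def rctrsWords (k t h : ℕ) (η : F) {m : ℕ} (α : Fin m → F) (b c lam : F) :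
    Set (Fin (m + 1) → F) :=
  { w | ∃ f : Fin k → F,
      w = Fin.snoc (fun i => (twPoly k t h η f).eval (α i))
            ((twPoly k t h η f).eval b - lam * (twPoly k t h η f).eval c) }

/-- The row-column twisted Reed-Solomon code `RCTRS_{h,t}(α,b,c,λ,η)`. -/
def RCTRS (k t h : ℕ) (η : F) {m : ℕ} (α : Fin m → F) (b c lam : F) :
    Submodule F (Fin (m + 1) → F) :=
  Submodule.span F (rctrsWords k t h η α b c lam)

/-- Codewords of the extended row-column twisted Reed-Solomon code. -/
def rctrsWordsExt (k t h : ℕ) (η : F) {m : ℕ} (α : Fin m → F) (b c lam : F) :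
    Set (Fin (m + 2) → F) :=
  { w | ∃ f : Fin k → F,
      w = Fin.snoc (Fin.snoc (fun i => (twPoly k t h η f).eval (α i))
            ((twPoly k t h η f).eval b - lam * (twPoly k t h η f).eval c)) (topCoeffFin f) }

/-- The extended row-column twisted Reed-Solomon code `RCTRS_{h,t}(α,b,c,λ,η,∞)`. -/
def RCTRSext (k t h : ℕ) (η : F) {m : ℕ} (α : Fin m → F) (b c lam : F) :
    Submodule F (Fin (m + 2) → F) :=
  Submodule.span F (rctrsWordsExt k t h η α b c lam)

/-- Hamming weight. -/
def wt {n : ℕ} (x : Fin n → F) : ℕ := Nat.card {i : Fin n // x i ≠ 0}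

/-- An `[n,k]` code is MDS if it has dimension `k` and minimum Hamming distance `n-k+1`. -/
def IsMDS {n : ℕ} (C : Submodule F (Fin n → F)) (k : ℕ) : Prop :=
  Module.finrank F C = k ∧ ∀ x ∈ C, x ≠ 0 → n - k + 1 ≤ wt x

/-- The Schur square of a code. -/
def schurSq {n : ℕ} (C : Submodule F (Fin n → F)) : Submodule F (Fin n → F) :=
  Submodule.span F { w | ∃ x ∈ C, ∃ y ∈ C, w = x * y }

/-- Code equivalence: a permutation of coordinates followed by nonzero coordinatewise scaling. -/
def codeEquiv {n : ℕ} (C D : Submodule F (Fin n → F)) : Prop :=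
  ∃ σ : Equiv.Perm (Fin n), ∃ v : Fin n → F, (∀ i, v i ≠ 0) ∧
    (C : Set (Fin n → F)) =
      (fun x : Fin n → F => fun i => v i * x (σ i)) '' (D : Set (Fin n → F))

/-- Generalized Reed-Solomon code. -/
def GRS (k : ℕ) {n : ℕ} (α v : Fin n → F) : Submodule F (Fin n → F) :=
  Submodule.span F
    { w | ∃ f ∈ Polynomial.degreeLT F k, w = fun i => v i * Polynomial.eval (α i) f }

/-- Extended generalized Reed-Solomon code. -/
def GRSext (k : ℕ) {n : ℕ} (α v : Fin n → F) : Submodule F (Fin (n + 1) → F) :=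
  Submodule.span F
    { w | ∃ f ∈ Polynomial.degreeLT F k,
        w = Fin.snoc (fun i => v i * Polynomial.eval (α i) f) (f.coeff (k - 1)) }

/-- A code of length `m+1` is non-RS if it is equivalent to no GRS and no extended GRS code. -/
def IsNonRS {m : ℕ} (C : Submodule F (Fin (m + 1) → F)) : Prop :=
  (∀ (k' : ℕ) (α v : Fin (m + 1) → F), Function.Injective α → (∀ i, v i ≠ 0) →
      ¬ codeEquiv C (GRS k' α v)) ∧
  (∀ (k' : ℕ) (α v : Fin m → F), Function.Injective α → (∀ i, v i ≠ 0) →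
      ¬ codeEquiv C (GRSext k' α v))

/-- Column twisted Reed-Solomon code. -/
def CTRS (k : ℕ) {m : ℕ} (α : Fin m → F) (b c lam : F) : Submodule F (Fin (m + 1) → F) :=
  Submodule.span F
    { w | ∃ f ∈ Polynomial.degreeLT F k,
        w = Fin.snoc (fun i => Polynomial.eval (α i) f)
              (Polynomial.eval b f - lam * Polynomial.eval c f) }

/-- Extended column twisted Reed-Solomon code. -/
def CTRSext (k : ℕ) {m : ℕ} (α : Fin m → F) (b c lam : F) : Submodule F (Fin (m + 2) → F) :=
  Submodule.span F
    { w | ∃ f ∈ Polynomial.degreeLT F k,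
        w = Fin.snoc (Fin.snoc (fun i => Polynomial.eval (α i) f)
              (Polynomial.eval b f - lam * Polynomial.eval c f)) (f.coeff (k - 1)) }

/-- `Φ_J(x) = ∏_{j∈J}(x−α_j)·(1 + (−1)^{|J|} η x ∏_{j∈J} α_j)`. -/
def PhiRC {m : ℕ} (α : Fin m → F) (η : F) (J : Finset (Fin m)) (x : F) : F :=
  (∏ j ∈ J, (x - α j)) * (1 + (-1 : F) ^ J.card * η * x * ∏ j ∈ J, α j)

/-- `Ψ_J(x) = ∏_{j∈J}(x−α_j)·(1 + ηx + η Σ_{j∈J} α_j)`. -/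
def PsiRC {m : ℕ} (α : Fin m → F) (η : F) (J : Finset (Fin m)) (x : F) : F :=
  (∏ j ∈ J, (x - α j)) * (1 + η * x + η * ∑ j ∈ J, α j)

/-- `Φ_{J,h}(x) = ∏_{j∈J}(x−α_j)·(1 + (−1)^{k−1−h} η σ_{k−h}(α_J, x))`. -/
def PhiRCh {m : ℕ} (α : Fin m → F) (η : F) (k h : ℕ) (J : Finset (Fin m)) (x : F) : F :=
  (∏ j ∈ J, (x - α j)) *
    (1 + (-1 : F) ^ (k - 1 - h) * η * Multiset.esymm (x ::ₘ J.val.map α) (k - h))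

/-- The image of a subgroup of `Fˣ` in `F`. -/
def unitsImage (G : Subgroup Fˣ) : Set F := (fun g : Fˣ => (g : F)) '' (G : Set Fˣ)

end

/-!
A nonzero codeword comes from a polynomial `g` of degree at most `k` with `g_k = η g_0`.
If `g` vanishes at the points `α_j`, `j ∈ S`, then `g = r q` with `r = ∏_{j ∈ S} (X - α_j)`
monic with coefficients in `K₀` and `deg q ≤ d := k - |S|`. A zero in the twisted coordinate
says `r(b) q(b) = λ r(c) q(c)`, where `r(b) = (∏ μ_j) r(c) ≠ λ r(c)` because `λ ∉ G`; a zero in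
the coordinate at infinity says `g_{k-1} = 0`. If a nonzero codeword had `k` or more zeros, then
`d ≤ 2`, and these conditions, all with coefficients in `K₀`, together with `q_d = η r(0) q_0`
would force `η a = e` for some `a, e ∈ K₀` with `e ≠ 0`, which is impossible when `η = 0` or
`η ∉ K₀`. So every nonzero codeword has fewer than `k` zeros, which gives both the dimension `k`
and the minimum distance `n - k + 1`.
-/

namespace Polynomial

section CommRing

variable {R : Type*} [CommRing R]

theorem Monic.coeff_mul_natDegree_add {r q : R[X]} (hr : r.Monic) {d : ℕ}
    (hq : q.natDegree ≤ d) : (r * q).coeff (r.natDegree + d) = q.coeff d := by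
  rw [coeff_mul_add_eq_of_natDegree_le le_rfl hq, hr.coeff_natDegree, one_mul]

theorem coeff_mul_X_pow_natDegree_add (r : R[X]) (d : ℕ) :
    (r * X ^ (d + 1)).coeff (r.natDegree + d) = r.nextCoeff := by
  rw [coeff_mul_X_pow', nextCoeff]
  rcases Nat.eq_zero_or_pos r.natDegree with h0 | hpos
  · simp [h0]
  · rw [if_pos (by omega), if_neg hpos.ne',
      show r.natDegree + d - (d + 1) = r.natDegree - 1 by omega]

theorem Monic.coeff_mul_natDegree_add_of_natDegree_le_succ {r q : R[X]} (hr : r.Monic) {d : ℕ}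
    (hq : q.natDegree ≤ d + 1) :
    (r * q).coeff (r.natDegree + d) = q.coeff d + r.nextCoeff * q.coeff (d + 1) := by
  obtain ⟨q', hq'⟩ : ∃ q', q' = q - C (q.coeff (d + 1)) * X ^ (d + 1) := ⟨_, rfl⟩
  have hq'd : q'.natDegree ≤ d := by
    refine natDegree_le_iff_coeff_eq_zero.mpr fun n hn => ?_
    rcases (Nat.succ_le_of_lt hn).eq_or_lt with rfl | hlt
    · simp [hq']
    · simp [hq', coeff_eq_zero_of_natDegree_lt (hq.trans_lt hlt), coeff_X_pow, hlt.ne']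
  have hsplit : r * q = r * q' + C (q.coeff (d + 1)) * (r * X ^ (d + 1)) := by
    rw [hq']; ring
  rw [hsplit, coeff_add, coeff_mul_add_eq_of_natDegree_le le_rfl hq'd, hr.coeff_natDegree,
    one_mul, coeff_C_mul, coeff_mul_X_pow_natDegree_add, hq', coeff_sub, coeff_C_mul,
    coeff_X_pow, if_neg (by omega), mul_zero, sub_zero, mul_comm]

theorem eq_zero_of_natDegree_le_of_coeff_eq_zero {q : R[X]} {d : ℕ} (hq : q.natDegree ≤ d)
    (h : ∀ i ≤ d, q.coeff i = 0) : q = 0 := by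
  ext n
  rcases le_or_gt n d with hn | hn
  · exact h n hn
  · exact coeff_eq_zero_of_natDegree_lt (hq.trans_lt hn)

variable {S : Type*} [SetLike S R] [SubringClass S R] {s : S} {p : R[X]}

theorem eval_mem_of_coeff_mem (hp : ∀ n, p.coeff n ∈ s) {x : R} (hx : x ∈ s) :
    p.eval x ∈ s := by
  rw [eval_eq_sum]
  exact sum_mem fun n _ => mul_mem (hp n) (pow_mem hx n)

theorem nextCoeff_mem_of_coeff_mem (hp : ∀ n, p.coeff n ∈ s) : p.nextCoeff ∈ s := by
  rw [nextCoeff]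
  split_ifs
  · exact zero_mem s
  · exact hp _

end CommRing

theorem prod_X_sub_C_coeff_mem {F ι : Type*} [Field F] {K₀ : Subfield F} {α : ι → F}
    (hα : ∀ j, α j ∈ K₀) (S : Finset ι) (n : ℕ) : (∏ j ∈ S, (X - C (α j))).coeff n ∈ K₀ := by
  have hmap : ∏ j ∈ S, (X - C (α j)) = (∏ j ∈ S, (X - C (⟨α j, hα j⟩ : K₀))).map K₀.subtype := by
    simp [Polynomial.map_prod]
  rw [hmap, coeff_map]
  exact Subtype.property _

end Polynomial

section Twisted

variable {F : Type*} [Field F]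

/-- The space `V_{k,1,0,η}`: for `t = 1`, `h = 0` the twist `η f_0 x^k` is the top coefficient. -/
def IsTwisted (k : ℕ) (η : F) (g : F[X]) : Prop :=
  g.natDegree ≤ k ∧ g.coeff k = η * g.coeff 0

theorem mul_ne_of_mem_of_ne_zero (K₀ : Subfield F) {η a e : F} (hη : η = 0 ∨ η ∉ K₀)
    (ha : a ∈ K₀) (he : e ∈ K₀) (he0 : e ≠ 0) : η * a ≠ e := by
  rintro rfl
  rcases hη with rfl | hη
  · exact he0 (zero_mul a)
  · have ha0 : a ≠ 0 := by rintro rfl; exact he0 (mul_zero η)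
    exact hη (by simpa [ha0] using K₀.mul_mem he (K₀.inv_mem ha))

variable (K₀ : Subfield F) {η b c lam : F} {r q : F[X]}

theorem not_isTwisted_monic_mul_of_natDegree_eq_zero (hη : η = 0 ∨ η ∉ K₀) (hr : r.Monic)
    (hrK : ∀ n, r.coeff n ∈ K₀) (hq0 : q ≠ 0) (hq : q.natDegree = 0) :
    ¬ IsTwisted r.natDegree η (r * q) := by
  rintro ⟨-, htw⟩
  have htop := hr.coeff_mul_natDegree_add hq.le
  rw [add_zero] at htop
  rw [htop, mul_coeff_zero] at htw
  have hv : q.coeff 0 ≠ 0 := fun hv =>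
    hq0 (eq_zero_of_natDegree_le_of_coeff_eq_zero hq.le fun i hi => by rwa [Nat.le_zero.mp hi])
  exact mul_ne_of_mem_of_ne_zero K₀ hη (hrK 0) K₀.one_mem one_ne_zero
    (mul_right_cancel₀ hv (by linear_combination -htw))

theorem not_isTwisted_monic_mul_of_coeff_eq_zero (hη : η = 0 ∨ η ∉ K₀) (hr : r.Monic)
    (hrK : ∀ n, r.coeff n ∈ K₀) (hq0 : q ≠ 0) (hq : q.natDegree ≤ 1)
    (hcoeff : (r * q).coeff r.natDegree = 0) :
    ¬ IsTwisted (r.natDegree + 1) η (r * q) := by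
  rintro ⟨-, htw⟩
  rw [hr.coeff_mul_natDegree_add hq, mul_coeff_zero] at htw
  have hnext := hr.coeff_mul_natDegree_add_of_natDegree_le_succ (d := 0) hq
  rw [add_zero, zero_add, hcoeff] at hnext
  have hw : q.coeff 1 ≠ 0 := fun hw => hq0 <| eq_zero_of_natDegree_le_of_coeff_eq_zero hq
    fun i hi => by interval_cases i <;> [linear_combination -hnext - r.nextCoeff * hw; exact hw]
  have ha : -(r.coeff 0 * r.nextCoeff) ∈ K₀ :=
    K₀.neg_mem (K₀.mul_mem (hrK 0) (nextCoeff_mem_of_coeff_mem hrK))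
  exact mul_ne_of_mem_of_ne_zero K₀ hη ha K₀.one_mem one_ne_zero
    (mul_right_cancel₀ hw (by linear_combination -htw + η * r.coeff 0 * hnext))

theorem not_isTwisted_monic_mul_of_eval_eq (hη : η = 0 ∨ η ∉ K₀) (hr : r.Monic)
    (hrK : ∀ n, r.coeff n ∈ K₀) (hb : b ∈ K₀) (hc : c ∈ K₀) (hlam : lam ∈ K₀)
    (hsep : r.eval b ≠ lam * r.eval c) (hq0 : q ≠ 0) (hq : q.natDegree ≤ 1)
    (heval : (r * q).eval b = lam * (r * q).eval c) :
    ¬ IsTwisted (r.natDegree + 1) η (r * q) := by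
  rintro ⟨-, htw⟩
  rw [hr.coeff_mul_natDegree_add hq, mul_coeff_zero] at htw
  rw [eval_mul, eval_mul, eval_eq_sum_range' (p := q) (n := 2) (by omega),
    eval_eq_sum_range' (p := q) (n := 2) (by omega)] at heval
  simp only [sum_range_succ, sum_range_zero, zero_add, pow_zero, pow_one, mul_one] at heval
  have hv : q.coeff 0 ≠ 0 := fun hv => hq0 <| eq_zero_of_natDegree_le_of_coeff_eq_zero hq
    fun i hi => by interval_cases i <;> simp [hv, htw]
  have hrb := eval_mem_of_coeff_mem hrK hb
  have hrc := eval_mem_of_coeff_mem hrK hc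
  refine mul_ne_of_mem_of_ne_zero K₀ hη
    (a := r.coeff 0 * (lam * r.eval c * c - r.eval b * b)) (by aesop) (by aesop)
    (sub_ne_zero.mpr hsep) (mul_left_cancel₀ hv ?_)
  linear_combination -heval - (lam * r.eval c * c - r.eval b * b) * htw

theorem not_isTwisted_monic_mul_of_eval_eq_of_coeff_eq_zero (hη : η = 0 ∨ η ∉ K₀)
    (hr : r.Monic) (hrK : ∀ n, r.coeff n ∈ K₀) (hb : b ∈ K₀) (hc : c ∈ K₀) (hlam : lam ∈ K₀)
    (hsep : r.eval b ≠ lam * r.eval c) (hq0 : q ≠ 0) (hq : q.natDegree ≤ 2)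
    (heval : (r * q).eval b = lam * (r * q).eval c)
    (hcoeff : (r * q).coeff (r.natDegree + 1) = 0) :
    ¬ IsTwisted (r.natDegree + 2) η (r * q) := by
  rintro ⟨-, htw⟩
  rw [hr.coeff_mul_natDegree_add hq, mul_coeff_zero] at htw
  rw [hr.coeff_mul_natDegree_add_of_natDegree_le_succ hq] at hcoeff
  rw [eval_mul, eval_mul, eval_eq_sum_range' (p := q) (n := 3) (by omega),
    eval_eq_sum_range' (p := q) (n := 3) (by omega)] at heval
  simp only [sum_range_succ, sum_range_zero, zero_add, pow_zero, pow_one, mul_one] at heval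
  have hv : q.coeff 0 ≠ 0 := fun hv => hq0 <| eq_zero_of_natDegree_le_of_coeff_eq_zero hq
    fun i hi => by interval_cases i <;> simp_all
  have hν := nextCoeff_mem_of_coeff_mem hrK
  have hrb := eval_mem_of_coeff_mem hrK hb
  have hrc := eval_mem_of_coeff_mem hrK hc
  refine mul_ne_of_mem_of_ne_zero K₀ hη
    (a := r.coeff 0 * (lam * r.eval c * (c ^ 2 - r.nextCoeff * c)
      - r.eval b * (b ^ 2 - r.nextCoeff * b))) (by aesop) (by aesop)
    (sub_ne_zero.mpr hsep) (mul_left_cancel₀ hv ?_)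
  linear_combination -heval - (lam * r.eval c * c - r.eval b * b) * hcoeff
    - (lam * r.eval c * (c ^ 2 - r.nextCoeff * c) - r.eval b * (b ^ 2 - r.nextCoeff * b)) * htw

theorem IsTwisted.natDegree_add_ite_add_ite_lt [DecidableEq F] {g : F[X]} {k : ℕ}
    (hη : η = 0 ∨ η ∉ K₀) (hr : r.Monic) (hrK : ∀ n, r.coeff n ∈ K₀) (hb : b ∈ K₀) (hc : c ∈ K₀)
    (hlam : lam ∈ K₀) (hsep : r.eval b ≠ lam * r.eval c) (hg : IsTwisted k η g) (hg0 : g ≠ 0)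
    (hdvd : r ∣ g) :
    r.natDegree + (if g.eval b = lam * g.eval c then 1 else 0) +
      (if g.coeff (k - 1) = 0 then 1 else 0) < k := by
  obtain ⟨q, rfl⟩ := hdvd
  have hq0 : q ≠ 0 := right_ne_zero_of_mul hg0
  have hdeg : r.natDegree + q.natDegree ≤ k := hr.natDegree_mul' hq0 ▸ hg.1
  have hdeg0 := not_isTwisted_monic_mul_of_natDegree_eq_zero K₀ hη hr hrK hq0
  by_contra! hle
  split_ifs at hle with hE hC hC
  · obtain rfl | rfl | rfl : k = r.natDegree ∨ k = r.natDegree + 1 ∨ k = r.natDegree + 2 := by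
      omega
    · exact hdeg0 (by omega) hg
    · exact not_isTwisted_monic_mul_of_eval_eq K₀ hη hr hrK hb hc hlam hsep hq0 (by omega) hE hg
    · exact not_isTwisted_monic_mul_of_eval_eq_of_coeff_eq_zero K₀ hη hr hrK hb hc hlam hsep hq0
        (by omega) hE hC hg
  · obtain rfl | rfl : k = r.natDegree ∨ k = r.natDegree + 1 := by omega
    · exact hdeg0 (by omega) hg
    · exact not_isTwisted_monic_mul_of_eval_eq K₀ hη hr hrK hb hc hlam hsep hq0 (by omega) hE hg
  · obtain rfl | rfl : k = r.natDegree ∨ k = r.natDegree + 1 := by omega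
    · exact hdeg0 (by omega) hg
    · exact not_isTwisted_monic_mul_of_coeff_eq_zero K₀ hη hr hrK hq0 (by omega) hC hg
  · obtain rfl : k = r.natDegree := by omega
    exact hdeg0 (by omega) hg

end Twisted

section Codes

variable {F : Type*} [Field F]

theorem twPoly_add {k t h : ℕ} (η : F) (f g : Fin k → F) :
    twPoly k t h η (f + g) = twPoly k t h η f + twPoly k t h η g := by
  rw [twPoly, twPoly, twPoly, add_add_add_comm, ← sum_add_distrib]
  congr 1
  · exact sum_congr rfl fun i _ => by rw [Pi.add_apply, C_add, add_mul]
  · split_ifs <;>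
      simp only [Pi.add_apply, mul_add, add_zero, mul_zero, C_add, add_mul, C_0, zero_mul]

theorem twPoly_smul {k t h : ℕ} (η : F) (a : F) (f : Fin k → F) :
    twPoly k t h η (a • f) = C a * twPoly k t h η f := by
  rw [twPoly, twPoly, mul_add, mul_sum]
  congr 1
  · exact sum_congr rfl fun i _ => by rw [Pi.smul_apply, smul_eq_mul, C_mul, mul_assoc]
  · split_ifs <;> simp only [Pi.smul_apply, smul_eq_mul, mul_zero, C_mul, C_0] <;> ring

noncomputable def twPolyLinearMap (k t h : ℕ) (η : F) : (Fin k → F) →ₗ[F] F[X] where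
  toFun := twPoly k t h η
  map_add' := twPoly_add η
  map_smul' a f := by rw [twPoly_smul, smul_eq_C_mul, RingHom.id_apply]

theorem twPoly_coeff_of_lt {k : ℕ} (η : F) (f : Fin k → F) {j : ℕ} (hj : j < k) :
    (twPoly k 1 0 η f).coeff j = f ⟨j, hj⟩ := by
  rw [twPoly, coeff_add, finsetSum_coeff, coeff_C_mul_X_pow, if_neg (by omega), add_zero,
    sum_eq_single ⟨j, hj⟩]
  · simp
  · intro i _ hne
    rw [coeff_C_mul_X_pow, if_neg fun h => hne (Fin.ext h.symm)]
  · simp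

theorem isTwisted_twPoly {k : ℕ} (hk : 0 < k) (η : F) (f : Fin k → F) :
    IsTwisted k η (twPoly k 1 0 η f) := by
  refine ⟨(natDegree_add_le _ _).trans (max_le ?_ ?_), ?_⟩
  · exact natDegree_sum_le_of_forall_le _ _ fun i _ =>
      (natDegree_C_mul_X_pow_le _ _).trans (by omega)
  · exact (natDegree_C_mul_X_pow_le _ _).trans (by omega)
  · rw [twPoly_coeff_of_lt η f hk, twPoly, coeff_add, finsetSum_coeff, dif_pos hk,
      coeff_C_mul_X_pow, if_pos (by omega), sum_eq_zero fun i _ => by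
        rw [coeff_C_mul_X_pow, if_neg (by omega)], zero_add]

theorem twPoly_ne_zero {k : ℕ} (η : F) {f : Fin k → F} (hf : f ≠ 0) : twPoly k 1 0 η f ≠ 0 :=
  fun h => hf <| funext fun j => by simpa [h] using (twPoly_coeff_of_lt η f j.2).symm

noncomputable def rcEval {m : ℕ} (α : Fin m → F) (b c lam : F) :
    F[X] →ₗ[F] (Fin (m + 1) → F) where
  toFun p := Fin.snoc (fun i => p.eval (α i)) (p.eval b - lam * p.eval c)
  map_add' p q := by
    ext i
    refine Fin.lastCases ?_ (fun j => ?_) i <;> simp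
    ring
  map_smul' a p := by
    ext i
    refine Fin.lastCases ?_ (fun j => ?_) i <;> simp
    ring

noncomputable def rcEvalExt (k : ℕ) {m : ℕ} (α : Fin m → F) (b c lam : F) :
    F[X] →ₗ[F] (Fin (m + 2) → F) where
  toFun p := Fin.snoc (rcEval α b c lam p) (p.coeff (k - 1))
  map_add' p q := by
    ext i
    refine Fin.lastCases ?_ (fun j => ?_) i <;> simp
  map_smul' a p := by
    ext i
    refine Fin.lastCases ?_ (fun j => ?_) i <;> simp

theorem rcEval_apply {m : ℕ} (α : Fin m → F) (b c lam : F) (p : F[X]) :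
    rcEval α b c lam p = Fin.snoc (fun i => p.eval (α i)) (p.eval b - lam * p.eval c) :=
  rfl

theorem rcEvalExt_apply (k : ℕ) {m : ℕ} (α : Fin m → F) (b c lam : F) (p : F[X]) :
    rcEvalExt k α b c lam p = Fin.snoc (rcEval α b c lam p) (p.coeff (k - 1)) :=
  rfl

theorem RCTRS_eq_range (k : ℕ) (η : F) {m : ℕ} (α : Fin m → F) (b c lam : F) :
    RCTRS k 1 0 η α b c lam =
      LinearMap.range (rcEval α b c lam ∘ₗ twPolyLinearMap k 1 0 η) := by
  rw [RCTRS, ← Submodule.span_eq (LinearMap.range _), LinearMap.coe_range]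
  congr 1
  ext w
  simp [rctrsWords, rcEval, twPolyLinearMap, eq_comm]

theorem RCTRSext_eq_range {k : ℕ} (hk : 0 < k) (η : F) {m : ℕ} (α : Fin m → F) (b c lam : F) :
    RCTRSext k 1 0 η α b c lam =
      LinearMap.range (rcEvalExt k α b c lam ∘ₗ twPolyLinearMap k 1 0 η) := by
  rw [RCTRSext, ← Submodule.span_eq (LinearMap.range _), LinearMap.coe_range]
  congr 1
  ext w
  simp [rctrsWordsExt, rcEvalExt, rcEval, twPolyLinearMap, eq_comm, topCoeffFin,
    twPoly_coeff_of_lt η _ (Nat.sub_lt hk one_pos), Nat.sub_lt hk one_pos]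

variable [DecidableEq F]

theorem wt_add_card_filter_eq_zero {n : ℕ} (x : Fin n → F) : wt x + #{i | x i = 0} = n := by
  rw [wt, Nat.card_eq_fintype_card, Fintype.card_subtype, add_comm,
    card_filter_add_card_filter_not, card_univ, Fintype.card_fin]

theorem card_filter_snoc_eq_zero {n : ℕ} (y : Fin n → F) (a : F) :
    #{i | (Fin.snoc y a : Fin (n + 1) → F) i = 0} = #{i | y i = 0} + if a = 0 then 1 else 0 := by
  rw [card_filter, card_filter, Fin.sum_univ_castSucc]
  simp

theorem isMDS_range_of_card_filter_eq_zero_lt {k n : ℕ}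
    (φ : (Fin k → F) →ₗ[F] (Fin n → F)) (hkn : k ≤ n)
    (h : ∀ f ≠ 0, #{i | φ f i = 0} < k) : IsMDS (LinearMap.range φ) k := by
  have hinj : Function.Injective φ := by
    refine LinearMap.ker_eq_bot.mp (LinearMap.ker_eq_bot'.mpr fun f hf => ?_)
    by_contra hf0
    have hlt := h f hf0
    simp only [hf, Pi.zero_apply, filter_true, card_univ, Fintype.card_fin] at hlt
    omega
  refine ⟨by rw [LinearMap.finrank_range_of_inj hinj, Module.finrank_fin_fun], ?_⟩
  rintro _ ⟨f, rfl⟩ hx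
  have hlt := h f fun hf => hx (by rw [hf, map_zero])
  have hwt := wt_add_card_filter_eq_zero (φ f)
  omega

variable {b c lam : F} {k m : ℕ} {α : Fin m → F}

theorem card_filter_rcEvalExt_eq_zero (g : F[X]) :
    #{i | rcEvalExt k α b c lam g i = 0} = #{j | g.eval (α j) = 0} +
      (if g.eval b = lam * g.eval c then 1 else 0) + (if g.coeff (k - 1) = 0 then 1 else 0) := by
  rw [rcEvalExt_apply, rcEval_apply, card_filter_snoc_eq_zero, card_filter_snoc_eq_zero]
  simp only [sub_eq_zero]

theorem card_filter_rcEval_eq_zero_le (g : F[X]) :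
    #{i | rcEval α b c lam g i = 0} ≤ #{i | rcEvalExt k α b c lam g i = 0} := by
  rw [rcEvalExt_apply, card_filter_snoc_eq_zero]
  exact Nat.le_add_right _ _

end Codes

section MDS

variable {F : Type*} [Field F] (K₀ : Subfield F) {η b c lam : F} {k m : ℕ} {α : Fin m → F}

theorem IsTwisted.card_filter_rcEvalExt_eq_zero_lt [DecidableEq F] {g : F[X]}
    (hη : η = 0 ∨ η ∉ K₀) (hα : ∀ j, α j ∈ K₀) (hαinj : Function.Injective α)
    (hb : b ∈ K₀) (hc : c ∈ K₀) (hlam : lam ∈ K₀)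
    (hsep : ∀ S : Finset (Fin m),
      (∏ j ∈ S, (X - C (α j))).eval b ≠ lam * (∏ j ∈ S, (X - C (α j))).eval c)
    (hg : IsTwisted k η g) (hg0 : g ≠ 0) :
    #{i | rcEvalExt k α b c lam g i = 0} < k := by
  set S : Finset (Fin m) := {j | g.eval (α j) = 0}
  have hdvd : ∏ j ∈ S, (X - C (α j)) ∣ g :=
    prod_dvd_of_coprime ((pairwise_coprime_X_sub_C hαinj).set_pairwise _)
      fun j hj => dvd_iff_isRoot.mpr (mem_filter.mp hj).2
  have hlt := hg.natDegree_add_ite_add_ite_lt K₀ hη (monic_prod_X_sub_C _ _)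
    (prod_X_sub_C_coeff_mem hα S) hb hc hlam (hsep S) hg0 hdvd
  rwa [natDegree_finsetProd_X_sub_C_eq_card, ← card_filter_rcEvalExt_eq_zero] at hlt

theorem isMDS_RCTRS_and_RCTRSext (hη : η = 0 ∨ η ∉ K₀) (hk0 : 0 < k) (hkn : k ≤ m + 1)
    (hα : ∀ j, α j ∈ K₀) (hαinj : Function.Injective α)
    (hb : b ∈ K₀) (hc : c ∈ K₀) (hlam : lam ∈ K₀)
    (hsep : ∀ S : Finset (Fin m),
      (∏ j ∈ S, (X - C (α j))).eval b ≠ lam * (∏ j ∈ S, (X - C (α j))).eval c) :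
    IsMDS (RCTRS k 1 0 η α b c lam) k ∧ IsMDS (RCTRSext k 1 0 η α b c lam) k := by
  classical
  have hzeros (f : Fin k → F) (hf : f ≠ 0) :=
    (isTwisted_twPoly hk0 η f).card_filter_rcEvalExt_eq_zero_lt K₀ hη hα hαinj hb hc hlam hsep
      (twPoly_ne_zero η hf)
  refine ⟨?_, ?_⟩
  · rw [RCTRS_eq_range]
    exact isMDS_range_of_card_filter_eq_zero_lt _ hkn fun f hf =>
      (card_filter_rcEval_eq_zero_le (k := k) (twPoly k 1 0 η f)).trans_lt (hzeros f hf)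
  · rw [RCTRSext_eq_range hk0]
    exact isMDS_range_of_card_filter_eq_zero_lt _ (by omega) hzeros

end MDS

section Points

variable {F : Type*} [Field F]

theorem sub_eq_mul_sub_of_eq_div {α μ b c : F} (hμ : μ ≠ 1)
    (hα : α = (b - μ * c) / (1 - μ)) : b - α = μ * (c - α) := by
  rw [hα]
  field_simp [sub_ne_zero.mpr hμ.symm]
  ring

theorem sub_ne_zero_of_eq_div {α μ b c : F} (hμ : μ ≠ 1) (hbc : b ≠ c)
    (hα : α = (b - μ * c) / (1 - μ)) : c - α ≠ 0 := by
  have h1 : (1 : F) - μ ≠ 0 := sub_ne_zero.mpr hμ.symm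
  rw [hα, sub_div' h1]
  exact div_ne_zero (by intro h; apply hbc; linear_combination -h) h1

theorem eval_prod_X_sub_C_ne {ι : Type*} (U : Submonoid F) {μ α : ι → F} {b c lam : F}
    (hμ : ∀ j, μ j ∈ U) (hrel : ∀ j, b - α j = μ j * (c - α j)) (hc : ∀ j, c - α j ≠ 0)
    (hlam : lam ∉ U) (S : Finset ι) :
    (∏ j ∈ S, (X - C (α j))).eval b ≠ lam * (∏ j ∈ S, (X - C (α j))).eval c := by
  simp only [eval_prod, eval_sub, eval_X, eval_C, hrel, prod_mul_distrib]
  intro h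
  have hne : ∏ j ∈ S, (c - α j) ≠ 0 := prod_ne_zero_iff.mpr fun j _ => hc j
  exact hlam (mul_right_cancel₀ hne h ▸ U.prod_mem fun j _ => hμ j)

end Points

theorem stmt7_general {F : Type*} [Field F] (K₀ : Subfield F)
    (G : Subgroup Fˣ) {m k : ℕ} (μ : Fin m → F)
    (hGK : ∀ g : Fˣ, g ∈ G → (g : F) ∈ K₀)
    (hμinj : Function.Injective μ) (hμ1 : ∀ i, μ i ≠ 1)
    (hGenum : unitsImage G = insert (1 : F) (Set.range μ))
    (b c : F) (hb : b ∈ K₀) (hc : c ∈ K₀) (hbc : b ≠ c)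
    (α : Fin m → F) (hα : ∀ i, α i = (b - μ i * c) / (1 - μ i))
    (hk0 : 0 < k) (hkn : k ≤ m + 1)
    (lam : F) (hlamK : lam ∈ K₀) (hlamG : lam ∉ unitsImage G)
    (η : F) (hη : η = 0 ∨ η ∉ K₀) :
    Function.Injective α ∧
    IsMDS (RCTRS k 1 0 η α b c lam) k ∧
    IsMDS (RCTRSext k 1 0 η α b c lam) k := by
  set U : Submonoid F := G.toSubmonoid.map (Units.coeHom F)
  have hμU (i : Fin m) : μ i ∈ U := by
    change μ i ∈ unitsImage G
    exact hGenum ▸ Set.mem_insert_of_mem _ ⟨i, rfl⟩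
  have hμK (i : Fin m) : μ i ∈ K₀ := by
    obtain ⟨g, hg, hgμ⟩ := hμU i
    exact hgμ ▸ hGK g hg
  have hrel (i : Fin m) := sub_eq_mul_sub_of_eq_div (hμ1 i) (hα i)
  have hcα (i : Fin m) := sub_ne_zero_of_eq_div (hμ1 i) hbc (hα i)
  have hαinj : Function.Injective α := fun i j hij => hμinj <|
    mul_right_cancel₀ (hcα i) (by rw [← hrel i, hij, hrel j])
  have hαK (i : Fin m) : α i ∈ K₀ := by
    rw [hα i]
    exact K₀.div_mem (K₀.sub_mem hb (K₀.mul_mem (hμK i) hc)) (K₀.sub_mem K₀.one_mem (hμK i))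
  exact ⟨hαinj, isMDS_RCTRS_and_RCTRSext K₀ hη hk0 hkn hαK hαinj hb hc hlamK
    (eval_prod_X_sub_C_ne U hμU hrel hcα hlamG)⟩

theorem stmt7 {F : Type*} [Field F] [Fintype F] (K₀ : Subfield F)
    (G : Subgroup Fˣ) {m k : ℕ} (μ : Fin m → F)
    (hGcard : Nat.card G = m + 1)
    (hGK : ∀ g : Fˣ, g ∈ G → (g : F) ∈ K₀)
    (hμinj : Function.Injective μ) (hμ1 : ∀ i, μ i ≠ 1)
    (hGenum : unitsImage G = insert (1 : F) (Set.range μ))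
    (b c : F) (hb : b ∈ K₀) (hc : c ∈ K₀) (hbc : b ≠ c)
    (α : Fin m → F) (hα : ∀ i, α i = (b - μ i * c) / (1 - μ i))
    (hk0 : 0 < k) (hkn : k ≤ m + 1)
    (lam : F) (hlamK : lam ∈ K₀) (hlamG : lam ∉ unitsImage G)
    (η : F) (hη : η = 0 ∨ η ∉ K₀) :
    Function.Injective α ∧
    IsMDS (RCTRS k 1 0 η α b c lam) k ∧
    IsMDS (RCTRSext k 1 0 η α b c lam) k :=
  stmt7_general K₀ G μ hGK hμinj hμ1 hGenum b c hb hc hbc α hα hk0 hkn lam hlamK hlamG η hη
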